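/- In an implicative aBE algebra, for all x, y: ((x → y) → y) → x = ((x → y) → y) → (y → x). -/

import Mathlib

class ImplicativeABE (X : Type*) where
  imp : X → X → X
  one : X
  one_imp : ∀ x, imp one x = x
  imp_one : ∀ x, imp x one = one
  imp_self : ∀ x, imp x x = one
  exch : ∀ x y z, imp x (imp y z) = imp y (imp x z)
  antisymm : ∀ x y, imp x y = one → imp y x = one → x = y
  implicative : ∀ x y, imp (imp x y) x = x

infixr:60 " ⮕ " => ImplicativeABE.imp
notation "𝟙" => ImplicativeABE.one

/-!
Write `a = (x ⮕ y) ⮕ y` and `v = a ⮕ x`. By exchange the claim says `y ⮕ v = v`, which by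
implicativity follows from `v ⮕ y = y`, and by antisymmetry from `g = 𝟙` for `g = (v ⮕ y) ⮕ y`.
The key tool is that `p ⮕ q = q` and `q ⮕ p = p` are equivalent (implicativity). Starting from
`g ⮕ a = a`, this equivalence and exchange transport the relation `g ⮕ _ = _` from `a` to `x`
and then to `v`; so `v ⮕ g = g`, while `v ⮕ g = 𝟙` holds in any BE-algebra.
-/

namespace ImplicativeABE

variable {X : Type*} [ImplicativeABE X]

theorem imp_imp_imp_eq_one (x y : X) : x ⮕ (x ⮕ y) ⮕ y = 𝟙 := by
  rw [exch, imp_self]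

theorem triple_imp_right (u z : X) : ((u ⮕ z) ⮕ z) ⮕ z = u ⮕ z := by
  refine antisymm _ _ ?_ (imp_imp_imp_eq_one _ _)
  calc (((u ⮕ z) ⮕ z) ⮕ z) ⮕ u ⮕ z
      = (((u ⮕ z) ⮕ z) ⮕ z) ⮕ u ⮕ ((u ⮕ z) ⮕ z) ⮕ z := by
        rw [exch u ((u ⮕ z) ⮕ z) z, implicative (u ⮕ z) z]
    _ = 𝟙 := by rw [exch _ u, imp_self, imp_one]

theorem imp_eq_right_comm {p q : X} : p ⮕ q = q ↔ q ⮕ p = p :=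
  have key {p q : X} (h : p ⮕ q = q) : q ⮕ p = p := h ▸ implicative p q
  ⟨key, key⟩

theorem imp_imp_eq_of_imp_eq_right {g p : X} (q : X) (h : g ⮕ p = p) :
    g ⮕ q ⮕ p = q ⮕ p := by
  rw [exch, h]

theorem imp_imp_congr_of_imp_eq {p q y : X} (w : X) (h : p ⮕ y = q ⮕ y) :
    p ⮕ w ⮕ y = q ⮕ w ⮕ y := by
  rw [exch p, h, exch]

theorem imp_imp_imp_imp_eq_one (x y : X) :
    ((((x ⮕ y) ⮕ y) ⮕ x) ⮕ y) ⮕ y = 𝟙 := by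
  set a := (x ⮕ y) ⮕ y
  set v := a ⮕ x
  set g := (v ⮕ y) ⮕ y
  have hga : g ⮕ a = a :=
    calc g ⮕ (x ⮕ y) ⮕ y = (x ⮕ y) ⮕ (v ⮕ y) := by rw [exch, triple_imp_right]
      _ = v ⮕ a := exch _ _ _
      _ = a := implicative a x
  have hxg : x ⮕ g = g :=
    (imp_imp_congr_of_imp_eq (v ⮕ y) (triple_imp_right x y)).symm.trans
      (imp_eq_right_comm.mp hga)
  have hvg : v ⮕ g = g :=
    imp_eq_right_comm.mp (imp_imp_eq_of_imp_eq_right a (imp_eq_right_comm.mp hxg))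
  rw [← hvg, imp_imp_imp_eq_one]

theorem imp_imp_imp_eq_right (x y : X) : (((x ⮕ y) ⮕ y) ⮕ x) ⮕ y = y :=
  antisymm _ _ (imp_imp_imp_imp_eq_one x y) (by rw [exch, imp_self, imp_one])

end ImplicativeABE

theorem stmt8 {X : Type*} [ImplicativeABE X] (x y : X) :
    ((x ⮕ y) ⮕ y) ⮕ x = ((x ⮕ y) ⮕ y) ⮕ (y ⮕ x) := by
  open ImplicativeABE in
  rw [← exch y, imp_eq_right_comm.mp (imp_imp_imp_eq_right x y)]
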